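/- arXiv:1603.02971 — 3 statements merged into one kernel-verified Lean document; each statement's English description precedes it below -/
import Mathlib

section
/- Let S be a bisection of G, u a vertex, (A_u, B_u) a u-pair for S, and T the bisection associated to (A_u, B_u). Then def_T(u) ≥ a_u + 1. -/
open Finset

/-- Number of neighbors of `x` in the set `A` (i.e. `W(x, A)`). -/
def nbrs {V : Type*} [DecidableEq V] (G : SimpleGraph V) [DecidableRel G.Adj]
    (x : V) (A : Finset V) : ℕ :=
  (A.filter (G.Adj x)).card

/-- Number of edges between the (disjoint) sets `A` and `B` (i.e. `W(A, B)`). -/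
def ew {V : Type*} [DecidableEq V] (G : SimpleGraph V) [DecidableRel G.Adj]
    (A B : Finset V) : ℕ :=
  ∑ x ∈ A, nbrs G x B

/-- Deficiency of `x` with respect to the bisection whose larger side is `S`:
`W(x,S) - W(x,S̄)` if `x ∈ S`, and `W(x,S̄) - W(x,S)` otherwise. -/
def defc {V : Type*} [Fintype V] [DecidableEq V] (G : SimpleGraph V)
    [DecidableRel G.Adj] (S : Finset V) (x : V) : ℤ :=
  if x ∈ S then (nbrs G x S : ℤ) - (nbrs G x Sᶜ : ℤ)
  else (nbrs G x Sᶜ : ℤ) - (nbrs G x S : ℤ)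

/-- Potential of the bisection `(S, S̄)`:
`Φ(S,S̄) = W(S,S̄) + (1/2)(Σ_{x∈S} a_x − Σ_{y∈S̄} a_y)`. -/
def pot {V : Type*} [Fintype V] [DecidableEq V] (G : SimpleGraph V)
    [DecidableRel G.Adj] (a : V → ℕ) (S : Finset V) : ℚ :=
  (ew G S Sᶜ : ℚ) + (∑ x ∈ S, (a x : ℚ) - ∑ y ∈ Sᶜ, (a y : ℚ)) / 2

/-- Rank of `u` with respect to the bisection `S`:
`rank_S(u) = ⌈(a_u + 1 − def_S(u)) / 2⌉`. -/
def rk {V : Type*} [Fintype V] [DecidableEq V] (G : SimpleGraph V)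
    [DecidableRel G.Adj] (a : V → ℕ) (S : Finset V) (u : V) : ℤ :=
  ⌈((((a u : ℤ) + 1 - defc G S u : ℤ) : ℚ)) / 2⌉

/-- A vertex `u` is stubborn if `a_u ≥ min {d(u), n − d(u) − 1}`. -/
def Stubborn {V : Type*} [Fintype V] [DecidableEq V] (G : SimpleGraph V)
    [DecidableRel G.Adj] (a : V → ℕ) (u : V) : Prop :=
  min (G.degree u : ℤ) ((Fintype.card V : ℤ) - (G.degree u : ℤ) - 1) ≤ (a u : ℤ)

/-- A `u`-pair `(A, B)` for the bisection `S`: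
if `u ∈ S`, `A ⊆ S ∩ N̄(u)`, `B ⊆ S̄ ∩ N(u)` with `|A| = |B| = rank_S(u)`;
if `u ∈ S̄`, `A ⊆ S ∩ N(u)`, `B ⊆ S̄ ∩ N̄(u)` with `|A| = rank_S(u)` and
`|B| = rank_S(u) − 1` (the vertex `u` itself is not moved). -/
def IsUPair {V : Type*} [Fintype V] [DecidableEq V] (G : SimpleGraph V)
    [DecidableRel G.Adj] (a : V → ℕ) (S : Finset V) (u : V)
    (A B : Finset V) : Prop :=
  if u ∈ S then
    A ⊆ S ∧ (∀ v ∈ A, ¬ G.Adj u v) ∧ u ∉ A ∧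
    B ⊆ Sᶜ ∧ (∀ v ∈ B, G.Adj u v) ∧
    (A.card : ℤ) = rk G a S u ∧ (B.card : ℤ) = rk G a S u
  else
    A ⊆ S ∧ (∀ v ∈ A, G.Adj u v) ∧
    B ⊆ Sᶜ ∧ (∀ v ∈ B, ¬ G.Adj u v) ∧ u ∉ B ∧
    (A.card : ℤ) = rk G a S u ∧ (B.card : ℤ) = rk G a S u - 1

/-- The larger side of the bisection associated with a `u`-pair `(A, B)`:
`S ∖ A ∪ B` if `u ∈ S`, and `S̄ ∖ B ∪ A` if `u ∈ S̄`. -/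
def assoc {V : Type*} [Fintype V] [DecidableEq V] (S : Finset V) (u : V)
    (A B : Finset V) : Finset V :=
  if u ∈ S then (S \ A) ∪ B else (Sᶜ \ B) ∪ A

/-
Moving the non-neighbours `A` of `u` out of `u`'s side and the neighbours `B` of `u` into it
(or, for `u ∈ S̄`, the non-neighbours `B` out and the neighbours `A` in, `u` switching sides)
gains `u` exactly `rank_S(u)` neighbours on its own side and loses as many on the other, so
`def_T(u) = def_S(u) + 2 rank_S(u)`, and `2 rank_S(u) ≥ a_u + 1 − def_S(u)` by the ceiling.
-/

section Neighbours

variable {V : Type*} [DecidableEq V] (G : SimpleGraph V) [DecidableRel G.Adj] (x : V)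

lemma nbrs_union {P Q : Finset V} (h : Disjoint P Q) :
    nbrs G x (P ∪ Q) = nbrs G x P + nbrs G x Q := by
  rw [nbrs, filter_union, card_union_of_disjoint (disjoint_filter_filter h)]; rfl

lemma nbrs_sdiff_add_nbrs {P A : Finset V} (h : A ⊆ P) :
    nbrs G x (P \ A) + nbrs G x A = nbrs G x P := by
  rw [← nbrs_union G x sdiff_disjoint, sdiff_union_of_subset h]

lemma nbrs_eq_zero_of_forall_not_adj {A : Finset V} (h : ∀ v ∈ A, ¬ G.Adj x v) :
    nbrs G x A = 0 := by
  rw [nbrs, filter_false_of_mem h, card_empty]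

lemma nbrs_eq_card_of_forall_adj {A : Finset V} (h : ∀ v ∈ A, G.Adj x v) :
    nbrs G x A = A.card := by
  rw [nbrs, filter_true_of_mem h]

lemma nbrs_sdiff_union {P A B : Finset V} (hA : A ⊆ P) (hPB : Disjoint P B)
    (hAx : ∀ v ∈ A, ¬ G.Adj x v) (hBx : ∀ v ∈ B, G.Adj x v) :
    nbrs G x (P \ A ∪ B) = nbrs G x P + B.card := by
  have hsplit := nbrs_sdiff_add_nbrs G x hA
  rw [nbrs_eq_zero_of_forall_not_adj G x hAx, add_zero] at hsplit
  rw [nbrs_union G x (hPB.mono_left sdiff_subset), hsplit, nbrs_eq_card_of_forall_adj G x hBx]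

end Neighbours

section Deficiency

variable {V : Type*} [Fintype V] [DecidableEq V] (G : SimpleGraph V) [DecidableRel G.Adj]

lemma defc_of_mem {P : Finset V} {x : V} (hx : x ∈ P) :
    defc G P x = 2 * (nbrs G x P : ℤ) - nbrs G x univ := by
  rw [defc, if_pos hx, ← union_compl P, nbrs_union G x disjoint_compl_right]
  push_cast; ring

lemma defc_of_notMem {P : Finset V} {x : V} (hx : x ∉ P) :
    defc G P x = 2 * (nbrs G x Pᶜ : ℤ) - nbrs G x univ := by
  rw [defc, if_neg hx, ← union_compl P, nbrs_union G x disjoint_compl_right]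
  push_cast; ring

lemma sub_defc_le_two_mul_rk (a : V → ℕ) (S : Finset V) (u : V) :
    (a u : ℤ) + 1 - defc G S u ≤ 2 * rk G a S u := by
  have h := Int.le_ceil (((a u + 1 - defc G S u : ℤ) : ℚ) / 2)
  have : ((a u + 1 - defc G S u : ℤ) : ℚ) ≤ 2 * (rk G a S u : ℚ) := by rw [rk]; linarith
  exact_mod_cast this

lemma defc_assoc_of_isUPair {a : V → ℕ} {S : Finset V} {u : V} {A B : Finset V}
    (hpair : IsUPair G a S u A B) :
    defc G (assoc S u A B) u = defc G S u + 2 * rk G a S u := by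
  by_cases hu : u ∈ S
  · simp only [IsUPair, if_pos hu] at hpair
    obtain ⟨hAS, hAu, huA, hBS, hBu, -, hBr⟩ := hpair
    have huT : u ∈ S \ A ∪ B := mem_union_left _ (mem_sdiff.2 ⟨hu, huA⟩)
    rw [assoc, if_pos hu, defc_of_mem G huT, defc_of_mem G hu,
      nbrs_sdiff_union G u hAS (disjoint_of_subset_right hBS disjoint_compl_right) hAu hBu]
    push_cast; rw [hBr]; ring
  · simp only [IsUPair, if_neg hu] at hpair
    obtain ⟨hAS, hAu, hBS, hBu, huB, hAr, -⟩ := hpair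
    have huT : u ∈ Sᶜ \ B ∪ A := mem_union_left _ (mem_sdiff.2 ⟨mem_compl.2 hu, huB⟩)
    rw [assoc, if_neg hu, defc_of_mem G huT, defc_of_notMem G hu,
      nbrs_sdiff_union G u hBS (disjoint_of_subset_right hAS disjoint_compl_left) hBu hAu]
    push_cast; rw [hAr]; ring

end Deficiency

theorem stmt6_general {V : Type*} [Fintype V] [DecidableEq V]
    (G : SimpleGraph V) [DecidableRel G.Adj] (a : V → ℕ)
    (S : Finset V)
    (u : V) (A B : Finset V) (hpair : IsUPair G a S u A B) :
    (a u : ℤ) + 1 ≤ defc G (assoc S u A B) u := by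
  rw [defc_assoc_of_isUPair G hpair]
  linarith [sub_defc_le_two_mul_rk G a S u]

/-- Lemma 3: If `(A_u, B_u)` is a `u`-pair for the bisection `S`
and `T` is the associated bisection, then `def_T(u) ≥ a_u + 1`. -/
theorem stmt6 {V : Type*} [Fintype V] [DecidableEq V]
    (G : SimpleGraph V) [DecidableRel G.Adj] (a : V → ℕ)
    (hodd : Odd (Fintype.card V))
    (S : Finset V) (hbis : 2 * S.card = Fintype.card V + 1)
    (u : V) (A B : Finset V) (hpair : IsUPair G a S u A B) :
    (a u : ℤ) + 1 ≤ defc G (assoc S u A B) u :=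
  stmt6_general G a S u A B hpair
end

section
/- Let S=(S,S̄) be a bisection, u ∈ S a vertex of minimum rank, and assume no vertex of minimum rank lies in S̄. Let T be the bisection associated with a u-pair (A_u,B_u). If y is an obstruction for T, then y ∈ S. -/
open Finset

/-!
An obstruction `y` for `T` is never stubborn, since `def_T(y) ≥ -min(d(y), n - d(y) - 1)` holds for
every vertex of the larger side of any bisection. Moving the `rank_S(u)` vertices of `A_u` out of
`S` changes each of `W(y, ·)` by at most `rank_S(u)`, so a vertex `y ∈ T ∖ S` satisfies
`def_T(y) ≥ -def_S(y) - 2 rank_S(u)`. If `y` were an obstruction in `S̄`, this would give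
`a_y + 1 - def_S(y) ≤ 2 rank_S(u)`, i.e. `rank_S(y) ≤ rank_S(u)`, against the assumption that the
non-stubborn vertices of `S̄` have rank larger than `rank_S(u)`.
-/

section Bisection

variable {V : Type*} [DecidableEq V] (G : SimpleGraph V) [DecidableRel G.Adj]

lemma nbrs_le_card (x : V) (A : Finset V) : nbrs G x A ≤ #A := card_filter_le _ _

lemma nbrs_le_nbrs_add_card_sdiff (x : V) (S T : Finset V) :
    nbrs G x S ≤ nbrs G x T + #(S \ T) := by
  unfold nbrs
  calc #(S.filter (G.Adj x)) ≤ #((T ∪ S \ T).filter (G.Adj x)) :=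
        card_le_card (filter_subset_filter _ (by simp))
    _ ≤ #(T.filter (G.Adj x)) + #((S \ T).filter (G.Adj x)) := by
        rw [filter_union]; exact card_union_le _ _
    _ ≤ #(T.filter (G.Adj x)) + #(S \ T) := by gcongr; exact filter_subset _ _

variable [Fintype V]

lemma nbrs_add_nbrs_compl (x : V) (S : Finset V) : nbrs G x S + nbrs G x Sᶜ = G.degree x := by
  rw [SimpleGraph.degree, SimpleGraph.neighborFinset_eq_filter, nbrs, nbrs, ← card_union_of_disjoint
    (disjoint_filter_filter disjoint_compl_right), ← filter_union, union_compl]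

lemma neg_defc_sub_le_defc {S T : Finset V} {y : V} (hyT : y ∈ T) (hyS : y ∉ S) :
    -defc G S y - 2 * #(S \ T) ≤ defc G T y := by
  have hS := nbrs_le_nbrs_add_card_sdiff G y S T
  have hTc := nbrs_le_nbrs_add_card_sdiff G y Tᶜ Sᶜ
  rw [compl_sdiff_compl] at hTc
  rw [defc, defc, if_pos hyT, if_neg hyS]
  omega

lemma not_stubborn_of_defc_lt {a : V → ℕ} {T : Finset V} (hT : 2 * #T = Fintype.card V + 1)
    {y : V} (hyT : y ∈ T) (hobs : defc G T y < -(a y : ℤ)) : ¬ Stubborn G a y := by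
  have hdeg := nbrs_add_nbrs_compl G y T
  have hTc := nbrs_le_card G y Tᶜ
  have hcard := card_compl_add_card T
  rw [defc, if_pos hyT] at hobs
  rw [Stubborn, not_le, lt_min_iff]
  omega

lemma rk_le_of_le {a : V → ℕ} {S : Finset V} {y : V} {k : ℤ}
    (h : (a y : ℤ) + 1 - defc G S y ≤ 2 * k) : rk G a S y ≤ k := by
  rw [rk, Int.ceil_le, div_le_iff₀ two_pos]
  exact_mod_cast h.trans_eq (mul_comm 2 k)

namespace IsUPair

variable {G} {a : V → ℕ} {S A B : Finset V} {u : V}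

lemma sdiff_assoc_subset (hu : u ∈ S) : S \ assoc S u A B ⊆ A := by
  rw [assoc, if_pos hu]
  intro v hv
  simp only [mem_sdiff, mem_union, not_or, not_and, not_not] at hv
  exact hv.2.1 hv.1

lemma card_assoc (h : IsUPair G a S u A B) (hu : u ∈ S) : #(assoc S u A B) = #S := by
  rw [IsUPair, if_pos hu] at h
  obtain ⟨hAS, -, -, hBS, -, hA, hB⟩ := h
  have hdisj : Disjoint (S \ A) B :=
    disjoint_of_subset_left sdiff_subset (disjoint_of_subset_right hBS disjoint_compl_right)
  rw [assoc, if_pos hu, card_union_of_disjoint hdisj, card_sdiff_of_subset hAS]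
  have := card_le_card hAS
  omega

lemma card_sdiff_assoc_le (h : IsUPair G a S u A B) (hu : u ∈ S) :
    (#(S \ assoc S u A B) : ℤ) ≤ rk G a S u := by
  rw [IsUPair, if_pos hu] at h
  rw [← h.2.2.2.2.2.1]
  exact_mod_cast card_le_card (sdiff_assoc_subset hu)

end IsUPair

end Bisection

theorem stmt10_general {V : Type*} [Fintype V] [DecidableEq V]
    (G : SimpleGraph V) [DecidableRel G.Adj] (a : V → ℕ)
    (S : Finset V) (hbis : 2 * S.card = Fintype.card V + 1)
    (u : V) (hu : u ∈ S)
    (hnotbar : ∀ v : V, v ∉ S → ¬ Stubborn G a v → rk G a S u < rk G a S v)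
    (A B : Finset V) (hpair : IsUPair G a S u A B)
    (y : V) (hyT : y ∈ assoc S u A B)
    (hobs : defc G (assoc S u A B) y < -(a y : ℤ)) :
    y ∈ S := by
  by_contra hyS
  have hTbis : 2 * #(assoc S u A B) = Fintype.card V + 1 := by rw [hpair.card_assoc hu, hbis]
  have hrk_lt := hnotbar y hyS (not_stubborn_of_defc_lt G hTbis hyT hobs)
  have hdefc := neg_defc_sub_le_defc G hyT hyS
  have hmoved := hpair.card_sdiff_assoc_le hu
  exact hrk_lt.not_ge (rk_le_of_le G (by omega))

/-- Lemma 6, second part: Let `u ∈ S` be a non-stubborn vertex of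
minimum rank for the bisection `S`, and assume no non-stubborn vertex of minimum
rank lies in `S̄`. Let `T` be the bisection associated with a `u`-pair
`(A_u, B_u)`. If `y` is an obstruction for `T`, then `y ∈ S`. -/
theorem stmt10 {V : Type*} [Fintype V] [DecidableEq V]
    (G : SimpleGraph V) [DecidableRel G.Adj] (a : V → ℕ)
    (hodd : Odd (Fintype.card V))
    (S : Finset V) (hbis : 2 * S.card = Fintype.card V + 1)
    (u : V) (hu : u ∈ S) (hns : ¬ Stubborn G a u)
    (hminrank : ∀ v : V, ¬ Stubborn G a v → rk G a S u ≤ rk G a S v)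
    (hnotbar : ∀ v : V, v ∉ S → ¬ Stubborn G a v → rk G a S u < rk G a S v)
    (A B : Finset V) (hpair : IsUPair G a S u A B)
    (y : V) (hyT : y ∈ assoc S u A B)
    (hobs : defc G (assoc S u A B) y < -(a y : ℤ)) :
    y ∈ S :=
  stmt10_general G a S hbis u hu hnotbar A B hpair y hyT hobs
end

section
/- Let S=(S,S̄) be a bisection with u ∈ S satisfying def_S(u) ≤ −a_u − 1, and suppose S has minimal potential. Let T = (S̄∪{u}, S∖{u}). Then def_T(u) ≥ a_u + 1, and for every vertex x ∈ S̄ it holds that def_T(x) ≥ −a_x. Hence T is a good bisection with good vertex u. -/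
open Finset

/-! Swapping `u ∈ S` with `y ∉ S` changes the cut by `def_S(u) + def_S(y) + 2 W(u, y)` and the
`a`-part of the potential by `a_y - a_u`. Minimality of the potential therefore gives
`def_S(y) + 2 W(u, y) ≥ a_u - a_y - def_S(u) ≥ 2 a_u + 1 - a_y`, and the left-hand side is exactly
`def_T(y)` for `T = S̄ ∪ {u}`; on the other hand `def_T(u) = -def_S(u)`. -/

section Bisection

variable {V : Type*} [DecidableEq V] (G : SimpleGraph V) [DecidableRel G.Adj]

lemma nbrs_insert {y : V} {B : Finset V} (hy : y ∉ B) (x : V) :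
    (nbrs G x (insert y B) : ℤ) = nbrs G x B + if G.Adj x y then 1 else 0 := by
  unfold nbrs
  rw [filter_insert]
  split
  · rw [card_insert_of_notMem fun h => hy (mem_of_mem_filter _ h)]
    push_cast
    ring
  · simp

lemma nbrs_erase {y : V} {B : Finset V} (hy : y ∈ B) (x : V) :
    (nbrs G x (B.erase y) : ℤ) = nbrs G x B - if G.Adj x y then 1 else 0 := by
  have h := nbrs_insert G (notMem_erase y B) x
  rw [insert_erase hy] at h
  linarith

lemma sum_adj_eq_nbrs (y : V) (B : Finset V) :
    ∑ x ∈ B, (if G.Adj x y then 1 else 0 : ℤ) = nbrs G y B := by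
  unfold nbrs
  rw [card_filter]
  push_cast
  exact sum_congr rfl fun x _ => by simp only [G.adj_comm x y]

variable [Fintype V]

lemma ew_insert_compl {y : V} {A : Finset V} (hy : y ∉ A) :
    (ew G (insert y A) (insert y A)ᶜ : ℤ) = ew G A Aᶜ + nbrs G y Aᶜ - nbrs G y A := by
  have hyc : y ∈ Aᶜ := mem_compl.2 hy
  have hself : (nbrs G y (Aᶜ.erase y) : ℤ) = nbrs G y Aᶜ := by
    simp [nbrs_erase G hyc]
  unfold ew
  rw [compl_insert, sum_insert hy]
  push_cast
  rw [hself, sum_congr rfl fun x _ => nbrs_erase G hyc x, sum_sub_distrib, sum_adj_eq_nbrs]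
  ring

lemma ew_erase_compl {u : V} {A : Finset V} (hu : u ∈ A) :
    (ew G (A.erase u) (A.erase u)ᶜ : ℤ) = ew G A Aᶜ + nbrs G u A - nbrs G u Aᶜ := by
  have h := ew_insert_compl G (notMem_erase u A)
  rw [insert_erase hu, compl_erase, nbrs_insert G (notMem_compl.2 hu), nbrs_erase G hu] at h
  rw [compl_erase]
  simp only [SimpleGraph.irrefl, if_false] at h
  linarith

lemma ew_swap {S : Finset V} {u y : V} (hu : u ∈ S) (hy : y ∉ S) :
    (ew G (insert y (S.erase u)) (insert y (S.erase u))ᶜ : ℤ)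
      = ew G S Sᶜ + defc G S u + defc G S y + 2 * if G.Adj u y then 1 else 0 := by
  rw [ew_insert_compl G fun h => hy (mem_of_mem_erase h), ew_erase_compl G hu, compl_erase,
    nbrs_insert G (notMem_compl.2 hu), nbrs_erase G hu]
  simp only [defc, if_pos hu, if_neg hy, G.adj_comm y u]
  ring

lemma pot_swap_sub {a : V → ℕ} {S : Finset V} {u y : V} (hu : u ∈ S) (hy : y ∉ S) :
    pot G a (insert y (S.erase u)) - pot G a S
      = ((defc G S u + defc G S y + 2 * (if G.Adj u y then 1 else 0) + a y - a u : ℤ) : ℚ) := by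
  have hyE : y ∉ S.erase u := fun h => hy (mem_of_mem_erase h)
  have hsum (A : Finset V) : ∑ x ∈ Aᶜ, (a x : ℚ) = ∑ x, (a x : ℚ) - ∑ x ∈ A, (a x : ℚ) := by
    rw [← sum_add_sum_compl A]
    ring
  have hew := congrArg (Int.cast : ℤ → ℚ) (ew_swap G hu hy)
  unfold pot
  rw [hsum, hsum, sum_insert hyE, sum_erase_eq_sub hu]
  push_cast at hew ⊢
  rw [hew]
  ring

lemma defc_insert_compl_self {S : Finset V} {u : V} (hu : u ∈ S) :
    defc G (insert u Sᶜ) u = -defc G S u := by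
  simp [defc, hu, compl_insert, nbrs_insert G (notMem_compl.2 hu), nbrs_erase G hu]

lemma defc_insert_compl_of_notMem {S : Finset V} {u x : V} (hu : u ∈ S) (hx : x ∉ S) :
    defc G (insert u Sᶜ) x = defc G S x + 2 * if G.Adj u x then 1 else 0 := by
  simp only [defc, mem_insert, mem_compl, hx, not_false_eq_true, or_true, if_true, if_false,
    compl_insert, compl_compl, nbrs_insert G (notMem_compl.2 hu), nbrs_erase G hu, G.adj_comm x u]
  ring

end Bisection

theorem stmt16_general {V : Type*} [Fintype V] [DecidableEq V]
    (G : SimpleGraph V) [DecidableRel G.Adj] (a : V → ℕ)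
    (S : Finset V)
    (hmin : ∀ x ∈ S, ∀ y ∉ S, pot G a S ≤ pot G a (insert y (S.erase x)))
    (u : V) (hu : u ∈ S) (hdef : defc G S u ≤ -(a u : ℤ) - 1) :
    (a u : ℤ) + 1 ≤ defc G (insert u Sᶜ) u ∧
      ∀ x, x ∉ S → -(a x : ℤ) ≤ defc G (insert u Sᶜ) x := by
  refine ⟨by rw [defc_insert_compl_self G hu]; linarith, fun x hx => ?_⟩
  have hswap : 0 ≤ defc G S u + defc G S x + 2 * (if G.Adj u x then 1 else 0) + a x - a u := by
    have h := sub_nonneg.2 (hmin u hu x hx)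
    rw [pot_swap_sub G hu hx] at h
    exact_mod_cast h
  rw [defc_insert_compl_of_notMem G hu hx]
  linarith

/-- Let `S = (S, S̄)` be a bisection of minimal potential with
`u ∈ S` satisfying `def_S(u) ≤ −a_u − 1`, and let `T = (S̄ ∪ {u}, S ∖ {u})`.
Then `def_T(u) ≥ a_u + 1` and `def_T(x) ≥ −a_x` for every `x ∈ S̄`;
hence `T` is a good bisection with good vertex `u`. -/
theorem stmt16 {V : Type*} [Fintype V] [DecidableEq V]
    (G : SimpleGraph V) [DecidableRel G.Adj] (a : V → ℕ)
    (hodd : Odd (Fintype.card V))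
    (S : Finset V) (hbis : 2 * S.card = Fintype.card V + 1)
    (hmin : ∀ x ∈ S, ∀ y ∉ S, pot G a S ≤ pot G a (insert y (S.erase x)))
    (u : V) (hu : u ∈ S) (hdef : defc G S u ≤ -(a u : ℤ) - 1) :
    (a u : ℤ) + 1 ≤ defc G (insert u Sᶜ) u ∧
      ∀ x, x ∉ S → -(a x : ℤ) ≤ defc G (insert u Sᶜ) x :=
  stmt16_general G a S hmin u hu hdef
end
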